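/- Let X be an uncountable Polish space and let C ⊆ X be a nonempty analytic set. Then there exists a sequence y : [ω]² → X such that C = Λ_y(r) = Λ_y(R). Consequently, the family of nonempty sets of the form Λ_y(r) for y : [ω]² → X, as well as the family of nonempty sets of the form Λ_y(R), each coincides with the family of nonempty analytic subsets of X. -/

import Mathlib

open Set Filter Topology

/-- Elements of `[ω]²` (two-element subsets of `ω`), encoded as ordered pairs
`(i, j)` with `i < j`. -/
abbrev Pair : Type := {p : ℕ × ℕ // p.1 < p.2}

/-- `[D]²`: the two-element subsets of `D`. -/
def pairsOf (D : Set ℕ) : Set Pair := {p | p.1.1 ∈ D ∧ p.1.2 ∈ D}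

variable {X : Type*}

/-- `η` is an `r`-limit point of the sequence `x : [ω]² → X`. -/
def IsRLimitPoint [TopologicalSpace X] (x : Pair → X) (η : X) : Prop :=
  ∃ D : Set ℕ, D.Infinite ∧ ∀ U ∈ 𝓝 η, ∃ K : Set ℕ, K.Finite ∧
    ∀ p ∈ pairsOf (D \ K), x p ∈ U

/-- `η` is an `r`-cluster point of the sequence `x : [ω]² → X`. -/
def IsRClusterPoint [TopologicalSpace X] (x : Pair → X) (η : X) : Prop :=
  ∀ U ∈ 𝓝 η, ∃ D : Set ℕ, D.Infinite ∧ pairsOf D ⊆ {p | x p ∈ U}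

/-- The Ramsey ideal `R` on `[ω]²`. -/
def ramseyIdeal : Set (Set Pair) :=
  {S | ∀ D : Set ℕ, D.Infinite → ¬ pairsOf D ⊆ S}

/-- `η` is an `I`-limit point of `y`: some subsequence indexed by a set `S ∉ I`
converges (in the ordinary sense) to `η`. -/
def IsIdealLimitPoint [TopologicalSpace X] (I : Set (Set Pair)) (y : Pair → X) (η : X) :
    Prop :=
  ∃ S : Set Pair, S ∉ I ∧ ∀ U ∈ 𝓝 η, {s ∈ S | y s ∉ U}.Finite

open MeasureTheory TopologicalSpace

/-!
A nonempty analytic set is the range of a continuous `f : (ℕ → ℕ) → X`. Code finite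
sequences of naturals by naturals and let `y (i, j) = f t` when the sequence coded by `i` is a
proper initial segment of the sequence `t` coded by `j` (padded by zeros), and `f 0` otherwise.
The codes of the initial segments of `α`, thinned out so that codes increase with length, form
a set `D` along which `y` converges to `f α` in the sense of `R`. Conversely, if `y`
`r`-converges to `η` along `D`, then either arbitrarily late pairs of `D` are not initial
segments of each other, and `η = f 0`, or the sequences coded by `D` eventually form a chain
whose union `α` gives `η = f α`. Every `R`-limit point is an `r`-limit point, so both limit sets
are `range f`.

For analyticity, coding `D` by its characteristic function presents either limit set as the
projection of a Borel subset of `X × (ℕ → Bool)`.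
-/

theorem notMem_ramseyIdeal_iff {S : Set Pair} :
    S ∉ ramseyIdeal ↔ ∃ D : Set ℕ, D.Infinite ∧ pairsOf D ⊆ S := by
  simp [ramseyIdeal]

theorem finite_setOf_snd_lt (N : ℕ) : {p : Pair | p.1.2 < N}.Finite :=
  ((finite_Iio N).prod (finite_Iio N)).preimage Subtype.val_injective.injOn |>.subset
    fun p hp => ⟨p.2.trans hp, hp⟩

section

variable [TopologicalSpace X] {y : Pair → X} {η : X}

theorem IsIdealLimitPoint.isRLimitPoint (h : IsIdealLimitPoint ramseyIdeal y η) :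
    IsRLimitPoint y η := by
  obtain ⟨S, hS, hconv⟩ := h
  obtain ⟨D, hD, hDS⟩ := notMem_ramseyIdeal_iff.1 hS
  refine ⟨D, hD, fun U hU => ⟨(fun p : Pair => p.1.1) '' {p ∈ S | y p ∉ U},
    (hconv U hU).image _, fun p hp => ?_⟩⟩
  by_contra hpU
  exact hp.1.2 ⟨p, ⟨hDS ⟨hp.1.1, hp.2.1⟩, hpU⟩, rfl⟩

theorem isRLimitPoint_iff_tendsto : IsRLimitPoint y η ↔ ∃ D : Set ℕ, D.Infinite ∧
    Tendsto y (comap (fun p : Pair => p.1.1) atTop ⊓ 𝓟 (pairsOf D)) (𝓝 η) := by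
  refine exists_congr fun D => and_congr_right fun _ => ?_
  rw [((atTop_basis.comap _).inf_principal _).tendsto_left_iff]
  refine forall₂_congr fun U _ => ⟨?_, ?_⟩
  · rintro ⟨K, hK, hKU⟩
    obtain ⟨N, hN⟩ := hK.bddAbove
    refine ⟨N + 1, trivial, ?_⟩
    rintro p ⟨hp, h1, h2⟩
    have hp : N < p.1.1 := hp
    exact hKU p ⟨⟨h1, fun h => (hN h).not_gt hp⟩, h2, fun h => (hN h).not_gt (hp.trans p.2)⟩
  · rintro ⟨N, -, hN⟩
    refine ⟨Iio N, finite_Iio N, ?_⟩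
    rintro p ⟨⟨h1, hp⟩, h2, -⟩
    exact hN ⟨show N ≤ p.1.1 from not_lt.1 hp, h1, h2⟩

theorem isIdealLimitPoint_ramseyIdeal_iff_tendsto :
    IsIdealLimitPoint ramseyIdeal y η ↔ ∃ D : Set ℕ, D.Infinite ∧
      Tendsto y (comap (fun p : Pair => p.1.2) atTop ⊓ 𝓟 (pairsOf D)) (𝓝 η) := by
  simp_rw [((atTop_basis.comap _).inf_principal _).tendsto_left_iff]
  constructor
  · rintro ⟨S, hS, hconv⟩
    obtain ⟨D, hD, hDS⟩ := notMem_ramseyIdeal_iff.1 hS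
    refine ⟨D, hD, fun U hU => ?_⟩
    obtain ⟨N, hN⟩ := ((hconv U hU).image fun p : Pair => p.1.2).bddAbove
    refine ⟨N + 1, trivial, ?_⟩
    rintro p ⟨hp, hpD⟩
    by_contra hpU
    exact (hN ⟨p, ⟨hDS hpD, hpU⟩, rfl⟩).not_gt hp
  · rintro ⟨D, hD, hconv⟩
    refine ⟨pairsOf D, notMem_ramseyIdeal_iff.2 ⟨D, hD, subset_rfl⟩, fun U hU => ?_⟩
    obtain ⟨N, -, hN⟩ := hconv U hU
    refine (finite_setOf_snd_lt N).subset ?_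
    rintro p ⟨hpD, hpU⟩
    by_contra hp
    exact hpU (hN ⟨show N ≤ p.1.2 from not_lt.1 hp, hpD⟩)

theorem isIdealLimitPoint_ramseyIdeal_of_strictMono {d : ℕ → ℕ} (hd : StrictMono d)
    {G : ℕ → X} (hG : Tendsto G atTop (𝓝 η))
    (hy : ∀ i j (hij : i < j), y ⟨(d i, d j), hd hij⟩ = G j) :
    IsIdealLimitPoint ramseyIdeal y η := by
  refine isIdealLimitPoint_ramseyIdeal_iff_tendsto.2
    ⟨range d, infinite_range_of_injective hd.injective, ?_⟩
  rw [((atTop_basis.comap _).inf_principal _).tendsto_left_iff]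
  intro U hU
  obtain ⟨M, hM⟩ := eventually_atTop.1 (hG hU)
  refine ⟨d M, trivial, ?_⟩
  rintro ⟨⟨_, _⟩, hp⟩ ⟨hMp, ⟨i, rfl⟩, ⟨j, rfl⟩⟩
  rw [hy i j (hd.lt_iff_lt.1 hp)]
  exact hM j (hd.le_iff_le.1 hMp)

end

section

variable [TopologicalSpace X] [PolishSpace X] (y : Pair → X)

theorem analyticSet_setOf_exists_tendsto (g : Pair → ℕ) :
    AnalyticSet {η | ∃ D : Set ℕ, D.Infinite ∧
      Tendsto y (comap g atTop ⊓ 𝓟 (pairsOf D)) (𝓝 η)} := by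
  classical
  let _ : MeasurableSpace X := borel X
  have _ : BorelSpace X := ⟨rfl⟩
  -- not found by instance search
  have _ : PolishSpace (ℕ → Bool) := {}
  let B : Set (X × (ℕ → Bool)) := {x | {n | x.2 n}.Infinite ∧
    ∀ V : countableBasis X, x.1 ∈ (V : Set X) →
      ∃ N, ∀ p : Pair, g p ∈ Ici N ∧ p ∈ pairsOf {n | x.2 n} → y p ∈ (V : Set X)}
  have hB : MeasurableSet B := by
    have hV (V : countableBasis X) :
        Measurable fun x : X × (ℕ → Bool) => x.1 ∈ (V : Set X) :=
      ((isOpen_of_mem_countableBasis V.2).measurableSet.mem).comp measurable_fst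
    have hχ (n : ℕ) : Measurable fun x : X × (ℕ → Bool) => x.2 n = true :=
      measurableSet_setOfPred.1 (measurableSet_eq_fun (by fun_prop) measurable_const)
    simp only [B, ← Nat.frequently_atTop_iff_infinite, frequently_atTop, pairsOf, mem_Ici,
      mem_ofPred_eq, measurableSet_setOfPred]
    fun_prop
  convert hB.analyticSet.image_of_continuous continuous_fst using 1
  ext η
  have hbasis (D : Set ℕ) := ((atTop_basis.comap g).inf_principal (pairsOf D)).tendsto_iff
    ((isBasis_countableBasis X).nhds_hasBasis (a := η)) (f := y)
  simp only [mem_ofPred_eq, mem_image, hbasis]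
  constructor
  · rintro ⟨D, hD, hconv⟩
    refine ⟨(η, fun n => decide (n ∈ D)), ⟨by simpa using hD, fun V hV => ?_⟩, rfl⟩
    simpa [pairsOf] using hconv V ⟨V.2, hV⟩
  · rintro ⟨⟨η, χ⟩, ⟨hχ, hconv⟩, rfl⟩
    refine ⟨{n | χ n}, hχ, fun V ⟨hVb, hV⟩ => ?_⟩
    simpa using hconv ⟨V, hVb⟩ hV

theorem analyticSet_setOf_isRLimitPoint : AnalyticSet {η | IsRLimitPoint y η} := by
  simpa only [isRLimitPoint_iff_tendsto] using analyticSet_setOf_exists_tendsto y _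

theorem analyticSet_setOf_isIdealLimitPoint_ramseyIdeal :
    AnalyticSet {η | IsIdealLimitPoint ramseyIdeal y η} := by
  simpa only [isIdealLimitPoint_ramseyIdeal_iff_tendsto] using
    analyticSet_setOf_exists_tendsto y _

end

def pad (l : List ℕ) (n : ℕ) : ℕ := l.getD n 0

def IsProperPrefix (s t : List ℕ) : Prop := s <+: t ∧ s.length < t.length

theorem map_range_prefix (α : ℕ → ℕ) {a b : ℕ} (hab : a ≤ b) :
    (List.range a).map α <+: (List.range b).map α := by
  have : List.range a = (List.range b).take a := by rw [List.take_range, min_eq_left hab]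
  exact this ▸ (List.take_prefix a _).map α

theorem tendsto_pad_map_range (α : ℕ → ℕ) :
    Tendsto (fun k => pad ((List.range k).map α)) atTop (𝓝 α) := by
  refine tendsto_pi_nhds.2 fun n => tendsto_const_nhds.congr' ?_
  filter_upwards [eventually_gt_atTop n] with k hk
  simp [pad, hk]

theorem exists_tendsto_pad_of_isProperPrefix {L : ℕ → List ℕ}
    (hL : ∀ ⦃i j⦄, i < j → IsProperPrefix (L i) (L j)) :
    ∃ α, Tendsto (fun j => pad (L j)) atTop (𝓝 α) := by
  have hlen : ∀ n, n < (L (n + 1)).length := fun n =>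
    (StrictMono.id_le (fun i j h => (hL h).2) (n + 1) : n + 1 ≤ _)
  refine ⟨fun n => pad (L (n + 1)) n, tendsto_pi_nhds.2 fun n => tendsto_const_nhds.congr' ?_⟩
  filter_upwards [eventually_gt_atTop (n + 1)] with j hj
  simp only [pad, List.getD_eq_getElem _ _ (hlen n),
    List.getD_eq_getElem _ _ ((hlen n).trans_le (hL hj).1.length_le)]
  exact (hL hj).1.getElem (hlen n)

open Classical in
noncomputable def treeSeq (f : (ℕ → ℕ) → X) (p : Pair) : X :=
  let t := Denumerable.ofNat (List ℕ) p.1.2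
  if IsProperPrefix (Denumerable.ofNat (List ℕ) p.1.1) t then f (pad t) else f 0

theorem treeSeq_of_isProperPrefix {f : (ℕ → ℕ) → X} {p : Pair}
    (h : IsProperPrefix (Denumerable.ofNat (List ℕ) p.1.1) (Denumerable.ofNat (List ℕ) p.1.2)) :
    treeSeq f p = f (pad (Denumerable.ofNat (List ℕ) p.1.2)) :=
  if_pos h

theorem treeSeq_of_not_isProperPrefix {f : (ℕ → ℕ) → X} {p : Pair}
    (h : ¬ IsProperPrefix (Denumerable.ofNat (List ℕ) p.1.1)
      (Denumerable.ofNat (List ℕ) p.1.2)) :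
    treeSeq f p = f 0 :=
  if_neg h

section

variable [TopologicalSpace X]

theorem isIdealLimitPoint_treeSeq {f : (ℕ → ℕ) → X} (hf : Continuous f)
    (α : ℕ → ℕ) : IsIdealLimitPoint ramseyIdeal (treeSeq f) (f α) := by
  let c : ℕ → ℕ := fun k => Encodable.encode ((List.range k).map α)
  have hc : Function.Injective c := fun a b h => by
    simpa using congrArg List.length (Encodable.encode_injective h)
  -- thin out so that the codes increase together with the lengths
  obtain ⟨φ, hφ, hcφ⟩ := strictMono_subseq_of_tendsto_atTop hc.nat_tendsto_atTop
  refine isIdealLimitPoint_ramseyIdeal_of_strictMono hcφ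
    (((hf.tendsto α).comp (tendsto_pad_map_range α)).comp hφ.tendsto_atTop) fun i j hij => ?_
  have hpre : IsProperPrefix ((List.range (φ i)).map α) ((List.range (φ j)).map α) :=
    ⟨map_range_prefix α (hφ hij).le, by simpa using hφ hij⟩
  rw [← Denumerable.ofNat_encode ((List.range (φ i)).map α),
    ← Denumerable.ofNat_encode ((List.range (φ j)).map α)] at hpre
  rw [treeSeq_of_isProperPrefix hpre]
  simp [c]

theorem mem_range_of_isRLimitPoint_treeSeq [T2Space X]
    {f : (ℕ → ℕ) → X} (hf : Continuous f) {η : X} (h : IsRLimitPoint (treeSeq f) η) :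
    η ∈ range f := by
  obtain ⟨D, hD, hconv⟩ := isRLimitPoint_iff_tendsto.1 h
  have hbasis := (atTop_basis.comap fun p : Pair => p.1.1).inf_principal (pairsOf D)
  by_cases hgood : ∀ᶠ p : Pair in comap (fun p : Pair => p.1.1) atTop ⊓ 𝓟 (pairsOf D),
      IsProperPrefix (Denumerable.ofNat (List ℕ) p.1.1) (Denumerable.ofNat (List ℕ) p.1.2)
  · obtain ⟨N, -, hN⟩ := hbasis.eventually_iff.1 hgood
    have hD' : {n | n ∈ D \ Iio N}.Infinite := hD.sdiff (finite_Iio N)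
    set d := Nat.nth (· ∈ D \ Iio N)
    have hd : StrictMono d := Nat.nth_strictMono hD'
    have hdD (j : ℕ) : d j ∈ D \ Iio N := Nat.nth_mem_of_infinite hD' j
    have hgood_d ⦃i j : ℕ⦄ (hij : i < j) :
        IsProperPrefix (Denumerable.ofNat (List ℕ) (d i)) (Denumerable.ofNat (List ℕ) (d j)) :=
      @hN ⟨(d i, d j), hd hij⟩
      ⟨show N ≤ d i from not_lt.1 (hdD i).2, (hdD i).1, (hdD j).1⟩
    obtain ⟨α, hα⟩ := exists_tendsto_pad_of_isProperPrefix hgood_d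
    let p (j : ℕ) : Pair := ⟨(d j, d (j + 1)), hd j.lt_succ_self⟩
    have hp : Tendsto p atTop (comap (fun p : Pair => p.1.1) atTop ⊓ 𝓟 (pairsOf D)) :=
      tendsto_inf.2 ⟨tendsto_comap_iff.2 hd.tendsto_atTop,
        tendsto_principal.2 (.of_forall fun j => ⟨(hdD j).1, (hdD (j + 1)).1⟩)⟩
    have hlim : Tendsto (fun j => treeSeq f (p j)) atTop (𝓝 (f α)) := by
      refine ((hf.tendsto α).comp (hα.comp (tendsto_add_atTop_nat 1))).congr fun j => ?_
      exact (treeSeq_of_isProperPrefix (p := p j) (hgood_d j.lt_succ_self)).symm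
    exact ⟨α, tendsto_nhds_unique hlim (hconv.comp hp)⟩
  · have hfreq : ∃ᶠ p in comap (fun p : Pair => p.1.1) atTop ⊓ 𝓟 (pairsOf D),
        treeSeq f p ∈ ({f 0} : Set X) :=
      (not_eventually.1 hgood).mono fun _ => treeSeq_of_not_isProperPrefix
    exact ⟨0, (closure_singleton (x := f 0) ▸ mem_closure_iff_frequently.2
      (hconv.frequently hfreq)).symm⟩

theorem setOf_isRLimitPoint_treeSeq [T2Space X] {f : (ℕ → ℕ) → X}
    (hf : Continuous f) : {η | IsRLimitPoint (treeSeq f) η} = range f :=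
  Subset.antisymm (fun _ => mem_range_of_isRLimitPoint_treeSeq hf)
    (range_subset_iff.2 fun α => (isIdealLimitPoint_treeSeq hf α).isRLimitPoint)

theorem setOf_isIdealLimitPoint_treeSeq [T2Space X] {f : (ℕ → ℕ) → X}
    (hf : Continuous f) : {η | IsIdealLimitPoint ramseyIdeal (treeSeq f) η} = range f :=
  Subset.antisymm (fun _ h => mem_range_of_isRLimitPoint_treeSeq hf h.isRLimitPoint)
    (range_subset_iff.2 (isIdealLimitPoint_treeSeq hf))

theorem MeasureTheory.AnalyticSet.exists_eq_setOf_isRLimitPoint_and_isIdealLimitPoint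
    [T2Space X] {A : Set X} (hA : AnalyticSet A) (hne : A.Nonempty) :
    ∃ y : Pair → X, A = {η | IsRLimitPoint y η} ∧
      A = {η | IsIdealLimitPoint ramseyIdeal y η} := by
  rw [AnalyticSet] at hA
  obtain ⟨f, hf, rfl⟩ := hA.resolve_left hne.ne_empty
  exact ⟨treeSeq f, (setOf_isRLimitPoint_treeSeq hf).symm,
    (setOf_isIdealLimitPoint_treeSeq hf).symm⟩

end

theorem analytic_eq_lambda_r_eq_lambda_ramsey_general
    [TopologicalSpace X] [PolishSpace X]
    (C : Set X) (hCne : C.Nonempty) (hC : MeasureTheory.AnalyticSet C) :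
    (∃ y : Pair → X, C = {η | IsRLimitPoint y η} ∧
        C = {η | IsIdealLimitPoint ramseyIdeal y η}) ∧
      {A : Set X | A.Nonempty ∧ ∃ y : Pair → X, A = {η | IsRLimitPoint y η}} =
        {A : Set X | A.Nonempty ∧ MeasureTheory.AnalyticSet A} ∧
      {A : Set X | A.Nonempty ∧
          ∃ y : Pair → X, A = {η | IsIdealLimitPoint ramseyIdeal y η}} =
        {A : Set X | A.Nonempty ∧ MeasureTheory.AnalyticSet A} := by
  refine ⟨hC.exists_eq_setOf_isRLimitPoint_and_isIdealLimitPoint hCne, ?_, ?_⟩ <;>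
    ext A <;> constructor
  · rintro ⟨hne, y, rfl⟩
    exact ⟨hne, analyticSet_setOf_isRLimitPoint y⟩
  · rintro ⟨hne, hA⟩
    obtain ⟨y, hy, -⟩ := hA.exists_eq_setOf_isRLimitPoint_and_isIdealLimitPoint hne
    exact ⟨hne, y, hy⟩
  · rintro ⟨hne, y, rfl⟩
    exact ⟨hne, analyticSet_setOf_isIdealLimitPoint_ramseyIdeal y⟩
  · rintro ⟨hne, hA⟩
    obtain ⟨y, -, hy⟩ := hA.exists_eq_setOf_isRLimitPoint_and_isIdealLimitPoint hne
    exact ⟨hne, y, hy⟩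

theorem analytic_eq_lambda_r_eq_lambda_ramsey
    [TopologicalSpace X] [PolishSpace X] [Uncountable X]
    (C : Set X) (hCne : C.Nonempty) (hC : MeasureTheory.AnalyticSet C) :
    (∃ y : Pair → X, C = {η | IsRLimitPoint y η} ∧
        C = {η | IsIdealLimitPoint ramseyIdeal y η}) ∧
      {A : Set X | A.Nonempty ∧ ∃ y : Pair → X, A = {η | IsRLimitPoint y η}} =
        {A : Set X | A.Nonempty ∧ MeasureTheory.AnalyticSet A} ∧
      {A : Set X | A.Nonempty ∧
          ∃ y : Pair → X, A = {η | IsIdealLimitPoint ramseyIdeal y η}} =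
        {A : Set X | A.Nonempty ∧ MeasureTheory.AnalyticSet A} :=
  analytic_eq_lambda_r_eq_lambda_ramsey_general C hCne hC
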